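/- arXiv:1002.4983 — 5 statements merged into one kernel-verified Lean document; each statement's English description precedes it below -/
import Mathlib

section
/- Let X be a nilpotent odd orthosymplectic endomorphism with dim V₀ = 2n+1 and dim V₁ = 2n, n ≥ 1, and suppose that dim Ker X = 3, dim(Ker X ∩ Im X) = 1, dim(Ker X ∩ V₀) = 2, and the restriction of φ to Ker X ∩ V₀ is nondegenerate (these conditions characterize the codimension-1 orbit O₁). Then the Springer fiber B_X has exactly two elements. -/
/-- The bilinear super-symmetric form `B` on `V = V₀ × V₁` associated to a nondegenerate
symmetric bilinear form `φ` on `V₀` and a nondegenerate alternating bilinear form `ψ`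
on `V₁`: `B((v,w),(v',w')) = φ(v,v') + ψ(w,w')`. -/
def Bform {V₀ V₁ : Type} [AddCommGroup V₀] [Module ℂ V₀] [AddCommGroup V₁] [Module ℂ V₁]
    (φ : V₀ →ₗ[ℂ] V₀ →ₗ[ℂ] ℂ) (ψ : V₁ →ₗ[ℂ] V₁ →ₗ[ℂ] ℂ) (p q : V₀ × V₁) : ℂ :=
  φ p.1 q.1 + ψ p.2 q.2

/-- The graded pieces of `V = V₀ × V₁`: `Vgr V₀ V₁ false = V₀ × 0` (even part) and
`Vgr V₀ V₁ true = 0 × V₁` (odd part). -/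
def Vgr (V₀ V₁ : Type) [AddCommGroup V₀] [Module ℂ V₀] [AddCommGroup V₁] [Module ℂ V₁]
    (ε : Bool) : Submodule ℂ (V₀ × V₁) :=
  if ε then Submodule.prod ⊥ ⊤ else Submodule.prod ⊤ ⊥

/-- The `B`-orthogonal complement `x^⊥ = {z : B(x,z) = 0}` of a vector `x ∈ V₀ × V₁`. -/
noncomputable def perp {V₀ V₁ : Type} [AddCommGroup V₀] [Module ℂ V₀] [AddCommGroup V₁] [Module ℂ V₁]
    (φ : V₀ →ₗ[ℂ] V₀ →ₗ[ℂ] ℂ) (ψ : V₁ →ₗ[ℂ] V₁ →ₗ[ℂ] ℂ) (x : V₀ × V₁) :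
    Submodule ℂ (V₀ × V₁) :=
  LinearMap.ker ((φ x.1).comp (LinearMap.fst ℂ V₀ V₁) + (ψ x.2).comp (LinearMap.snd ℂ V₀ V₁))

/-!
Write `Y = u ∘ u*`, an endomorphism of `V₁`. Since `Im u*` is `φ`-orthogonal to `Ker u` and `φ` is
nondegenerate on `Ker u`, we get `Ker u ∩ Im u* = 0`, hence `Ker Y = Ker u*` is a line; as `Y` is
nilpotent (it is `X²` on `V₁`), it is a single Jordan block of size `2n`. For a point `(E, F)` of
the fiber, `u*(F_i) ⊆ E_i` and `u(E_i) ⊆ F_{i-1}` give `Y(F_i) ⊆ F_{i-1}`, which forces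
`F_i = Ker Yⁱ`; a dimension count then gives `E_i = E₁ ⊕ u*(F_i)`, where `E₁` is an isotropic
line of the nondegenerate plane `Ker u`. There are exactly two such lines, and both give points of
the fiber because `Ker Yⁿ = Im Yⁿ` is `ψ`-isotropic (`Y` is `ψ`-skew).
-/

open Module Submodule LinearMap

section LinearAlgebra

variable {K M M' : Type*} [Field K] [AddCommGroup M] [Module K M] [AddCommGroup M'] [Module K M']

def Submodule.prodEquivProd (p : Submodule K M) (q : Submodule K M') : p.prod q ≃ₗ[K] p × q where
  toFun x := (⟨x.1.1, x.2.1⟩, ⟨x.1.2, x.2.2⟩)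
  map_add' _ _ := rfl
  map_smul' _ _ := rfl
  invFun y := ⟨(y.1.1, y.2.1), ⟨y.1.2, y.2.2⟩⟩

theorem Submodule.finrank_prod [FiniteDimensional K M] [FiniteDimensional K M']
    (p : Submodule K M) (q : Submodule K M') :
    finrank K (p.prod q) = finrank K p + finrank K q := by
  rw [(p.prodEquivProd q).finrank_eq, Module.finrank_prod]

theorem finrank_map_add_finrank_ker_of_ker_le [FiniteDimensional K M] (f : M →ₗ[K] M')
    {p : Submodule K M} (hp : ker f ≤ p) :
    finrank K (p.map f) + finrank K (ker f) = finrank K p := by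
  rw [← (comapSubtypeEquivOfLe hp).finrank_eq, ← ker_domRestrict, ← range_domRestrict,
    finrank_range_add_finrank_ker]

theorem ker_pow_le_ker_pow (T : End K M) {a b : ℕ} (h : a ≤ b) : ker (T ^ a) ≤ ker (T ^ b) :=
  fun _ hx => Module.End.pow_map_zero_of_le h hx

theorem apply_mem_ker_pow {T : End K M} {m : ℕ} {x : M} (hx : x ∈ ker (T ^ (m + 1))) :
    T x ∈ ker (T ^ m) := by
  rwa [mem_ker, ← Module.End.mul_apply, ← pow_succ]

theorem finrank_ker_pow_le_mul [FiniteDimensional K M] (T : End K M) (m : ℕ) :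
    finrank K (ker (T ^ m)) ≤ m * finrank K (ker T) := by
  induction m with
  | zero => simp [Module.End.one_eq_id]
  | succ m ih =>
    have hker : ker T ≤ ker (T ^ (m + 1)) := by
      simpa using ker_pow_le_ker_pow T (Nat.le_add_left 1 m)
    have hmap : (ker (T ^ (m + 1))).map T ≤ ker (T ^ m) := by
      rintro _ ⟨x, hx, rfl⟩
      exact apply_mem_ker_pow hx
    have := finrank_map_add_finrank_ker_of_ker_le T hker
    have := finrank_mono hmap
    rw [Nat.succ_mul]
    omega

theorem min_le_finrank_ker_pow [FiniteDimensional K M] {T : End K M} (hT : IsNilpotent T)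
    (m : ℕ) : min m (finrank K M) ≤ finrank K (ker (T ^ m)) := by
  induction m with
  | zero => simp
  | succ m ih =>
    have hle := ker_pow_le_ker_pow T (Nat.le_succ m)
    by_cases htop : ker (T ^ m) = ⊤
    · rw [htop, top_le_iff] at hle
      rw [hle, finrank_top]
      omega
    · have hlt : ker (T ^ m) < ker (T ^ (m + 1)) := by
        refine lt_of_le_of_ne hle fun heq => htop ?_
        obtain ⟨k, hk⟩ := hT
        rw [Module.End.ker_pow_constant heq k, pow_add, hk, mul_zero, ker_zero]
      have := finrank_lt_finrank_of_lt hlt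
      omega

theorem finrank_ker_pow_of_finrank_ker_eq_one [FiniteDimensional K M] {T : End K M}
    (hT : IsNilpotent T) (h1 : finrank K (ker T) = 1) {m : ℕ} (hm : m ≤ finrank K M) :
    finrank K (ker (T ^ m)) = m := by
  have hle := finrank_ker_pow_le_mul T m
  have hge := min_le_finrank_ker_pow hT m
  rw [h1, mul_one] at hle
  omega

theorem ker_pow_eq_range_pow_of_finrank_ker_eq_one [FiniteDimensional K M] {T : End K M}
    (hT : IsNilpotent T) (h1 : finrank K (ker T) = 1) {m : ℕ} (hm : finrank K M = 2 * m) :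
    ker (T ^ m) = range (T ^ m) := by
  have hzero : T ^ (m + m) = 0 := by
    rw [← ker_eq_top]
    apply eq_top_of_finrank_eq
    rw [finrank_ker_pow_of_finrank_ker_eq_one hT h1 (by omega)]
    omega
  have hle : range (T ^ m) ≤ ker (T ^ m) := by
    rintro _ ⟨x, rfl⟩
    rw [mem_ker, ← Module.End.mul_apply, ← pow_add, hzero, LinearMap.zero_apply]
  have hrank := finrank_range_add_finrank_ker (T ^ m)
  have hker := finrank_ker_pow_of_finrank_ker_eq_one hT h1 (m := m) (by omega)
  exact (eq_of_le_of_finrank_le hle (by omega)).symm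

theorem LinearMap.IsAdjointPair.pow {B : M →ₗ[K] M →ₗ[K] K} {f g : End K M}
    (h : IsAdjointPair B B f g) : ∀ k : ℕ, IsAdjointPair B B ⇑(f ^ k) ⇑(g ^ k)
  | 0 => isAdjointPair_one
  | k + 1 => by
    rw [pow_succ f, pow_succ' g]
    exact (h.pow k).mul h

end LinearAlgebra

section Isotropic

variable {K M : Type*} [Field K] [AddCommGroup M] [Module K M]

def IsTotallyIsotropic (B : M →ₗ[K] M →ₗ[K] K) (S : Submodule K M) : Prop :=
  ∀ x ∈ S, ∀ y ∈ S, B x y = 0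

theorem IsTotallyIsotropic.sup {B : M →ₗ[K] M →ₗ[K] K} (hB : ∀ x y, B x y = B y x)
    {S T : Submodule K M} (hS : IsTotallyIsotropic B S) (hT : IsTotallyIsotropic B T)
    (hST : ∀ x ∈ S, ∀ y ∈ T, B x y = 0) : IsTotallyIsotropic B (S ⊔ T) := by
  intro x hx y hy
  obtain ⟨s, hs, t, ht, rfl⟩ := mem_sup.mp hx
  obtain ⟨s', hs', t', ht', rfl⟩ := mem_sup.mp hy
  simp only [map_add, LinearMap.add_apply, hS s hs s' hs', hT t ht t' ht', hST s hs t' ht',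
    hB t s', hST s' hs' t ht, add_zero]

theorem isTotallyIsotropic_span_singleton {B : M →ₗ[K] M →ₗ[K] K} {x : M} (hx : B x x = 0) :
    IsTotallyIsotropic B (K ∙ x) := by
  intro y hy z hz
  obtain ⟨a, rfl⟩ := mem_span_singleton.mp hy
  obtain ⟨b, rfl⟩ := mem_span_singleton.mp hz
  simp [hx]

theorem isTotallyIsotropic_ker_pow {B : M →ₗ[K] M →ₗ[K] K} {T : End K M}
    (hT : B.IsSkewAdjoint T) {m : ℕ} (hm : ker (T ^ m) = range (T ^ m)) :
    IsTotallyIsotropic B (ker (T ^ m)) := by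
  intro x hx y hy
  obtain ⟨z, rfl⟩ := hm ▸ hx
  rw [IsAdjointPair.pow (g := -T) hT m, neg_pow, Module.End.mul_apply, mem_ker.mp hy, map_zero,
    map_zero]

theorem Submodule.eq_span_singleton_of_finrank_eq_one {ℓ : Submodule K M}
    (hℓ : finrank K ℓ = 1) {x : M} (hx : x ∈ ℓ) (hx0 : x ≠ 0) : ℓ = K ∙ x := by
  have : FiniteDimensional K ℓ := Module.finite_of_finrank_pos (by omega)
  exact (eq_of_le_of_finrank_le ((span_singleton_le_iff_mem _ _).mpr hx)
    (by rw [hℓ, finrank_span_singleton hx0])).symm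

theorem span_pair_eq_of_hyperbolic {B : M →ₗ[K] M →ₗ[K] K} (hB : ∀ x y, B x y = B y x)
    {W : Submodule K M} (hW : finrank K W = 2) {e f : M} (he : e ∈ W) (hf : f ∈ W)
    (hee : B e e = 0) (hff : B f f = 0) (hef : B e f = 1) : span K {e, f} = W := by
  have hind : LinearIndependent K ![e, f] := by
    refine LinearIndependent.pair_iff.mpr fun s t hst => ⟨?_, ?_⟩
    · simpa [hee, hB f e, hef, hff] using congrArg (B f) hst
    · simpa [hee, hef] using congrArg (B e) hst
  have : FiniteDimensional K W := Module.finite_of_finrank_pos (by omega)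
  refine eq_of_le_of_finrank_le (span_le.mpr ?_) ?_
  · rintro x (rfl | rfl) <;> assumption
  · have := finrank_span_eq_card hind
    rw [Matrix.range_cons_cons_empty, Fintype.card_fin] at this
    rw [hW, this]

variable [IsAlgClosed K] [NeZero (2 : K)]

theorem exists_isotropic_ne_zero {B : M →ₗ[K] M →ₗ[K] K} (hB : ∀ x y, B x y = B y x)
    {W : Submodule K M} (hW : 1 < finrank K W) : ∃ v ∈ W, v ≠ 0 ∧ B v v = 0 := by
  have : Nontrivial W := Module.nontrivial_of_finrank_pos (R := K) (by omega)
  obtain ⟨x, hx0⟩ := exists_ne (0 : W)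
  obtain ⟨y, hxy⟩ := exists_linearIndependent_pair_of_one_lt_finrank hW hx0
  have hy0 : (y : M) ≠ 0 := by simpa using hxy.ne_zero 1
  by_cases hyy : B y y = 0
  · exact ⟨y, y.2, hy0, hyy⟩
  -- `B (x + t • y) (x + t • y)` is a quadratic polynomial in `t` with leading coefficient `B y y`
  obtain ⟨t, ht⟩ := exists_quadratic_eq_zero (b := 2 * B x y) (c := B x x) hyy
    (IsAlgClosed.exists_eq_mul_self _)
  refine ⟨x + t • y, W.add_mem x.2 (W.smul_mem t y.2), fun h => ?_, ?_⟩
  · have := (LinearIndependent.pair_iff.mp hxy 1 t (Subtype.ext (by simpa using h))).1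
    exact one_ne_zero this
  · simp only [map_add, map_smul, LinearMap.add_apply, LinearMap.smul_apply, smul_eq_mul, hB y x]
    linear_combination ht

theorem exists_hyperbolic_pair {B : M →ₗ[K] M →ₗ[K] K} (hB : ∀ x y, B x y = B y x)
    {W : Submodule K M} (hW : 1 < finrank K W) (hnd : ∀ x ∈ W, (∀ y ∈ W, B x y = 0) → x = 0) :
    ∃ e ∈ W, ∃ f ∈ W, B e e = 0 ∧ B f f = 0 ∧ B e f = 1 := by
  obtain ⟨e, heW, he0, hee⟩ := exists_isotropic_ne_zero hB hW
  obtain ⟨w, hwW, hew⟩ : ∃ w ∈ W, B e w ≠ 0 := by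
    by_contra! h
    exact he0 (hnd e heW h)
  set c := B e w
  -- rescale `w` so that it pairs to `1` with `e`, then add a multiple of `e` to make it isotropic
  refine ⟨e, heW, c⁻¹ • w - (B w w / (2 * c ^ 2)) • e,
    W.sub_mem (W.smul_mem _ hwW) (W.smul_mem _ heW), hee, ?_, ?_⟩
  · simp only [map_sub, map_smul, LinearMap.sub_apply, LinearMap.smul_apply, smul_eq_mul, hee,
      hB w e]
    field_simp
    ring
  · simp only [map_sub, map_smul, smul_eq_mul, hee]
    field_simp
    ring

theorem exists_isotropic_lines_of_finrank_eq_two {B : M →ₗ[K] M →ₗ[K] K}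
    (hB : ∀ x y, B x y = B y x) {W : Submodule K M} (hW : finrank K W = 2)
    (hnd : ∀ x ∈ W, (∀ y ∈ W, B x y = 0) → x = 0) :
    ∃ ℓ₁ ℓ₂ : Submodule K M, ℓ₁ ≠ ℓ₂ ∧
      {ℓ | ℓ ≤ W ∧ finrank K ℓ = 1 ∧ IsTotallyIsotropic B ℓ} = {ℓ₁, ℓ₂} := by
  obtain ⟨e, he, f, hf, hee, hff, hef⟩ := exists_hyperbolic_pair hB (by omega) hnd
  have he0 : e ≠ 0 := by rintro rfl; simp at hef
  have hf0 : f ≠ 0 := by rintro rfl; simp at hef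
  have hline : ∀ {v : M}, v ∈ W → v ≠ 0 → B v v = 0 →
      (K ∙ v) ≤ W ∧ finrank K (K ∙ v) = 1 ∧ IsTotallyIsotropic B (K ∙ v) := fun hv hv0 hvv =>
    ⟨(span_singleton_le_iff_mem _ _).mpr hv, finrank_span_singleton hv0,
      isTotallyIsotropic_span_singleton hvv⟩
  refine ⟨K ∙ e, K ∙ f, fun h => ?_, Set.ext fun ℓ => ⟨?_, ?_⟩⟩
  · obtain ⟨c, rfl⟩ := mem_span_singleton.mp (h ▸ mem_span_singleton_self f)
    simp [hee] at hef
  · rintro ⟨hℓW, hℓ, hiso⟩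
    obtain ⟨x, hx, hx0⟩ := exists_mem_ne_zero_of_ne_bot (p := ℓ) fun h => by
      rw [h, finrank_bot] at hℓ
      exact zero_ne_one hℓ
    rw [eq_span_singleton_of_finrank_eq_one hℓ hx hx0]
    obtain ⟨a, b, rfl⟩ :=
      mem_span_pair.mp ((span_pair_eq_of_hyperbolic hB hW he hf hee hff hef).symm ▸ hℓW hx)
    have hab : 2 * (a * b) = 0 := by
      have := hiso _ hx _ hx
      simp only [map_add, map_smul, LinearMap.add_apply, LinearMap.smul_apply, smul_eq_mul, hee,
        hff, hef, hB f e] at this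
      linear_combination this
    rcases mul_eq_zero.mp ((mul_eq_zero.mp hab).resolve_left two_ne_zero) with rfl | rfl
    · right
      have hb : b ≠ 0 := by rintro rfl; simp at hx0
      simp [span_singleton_smul_eq hb.isUnit]
    · left
      have ha : a ≠ 0 := by rintro rfl; simp at hx0
      simp [span_singleton_smul_eq ha.isUnit]
  · rintro (rfl | rfl)
    exacts [hline he he0 hee, hline hf hf0 hff]

end Isotropic

section OddOrthosymplectic

variable {V₀ V₁ : Type} [AddCommGroup V₀] [Module ℂ V₀] [AddCommGroup V₁] [Module ℂ V₁]

/-- `Fin n` indices are shifted by one from the paper: `EF.1 i` is `E_{i+1}`. -/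
def springerFiber (φ : V₀ →ₗ[ℂ] V₀ →ₗ[ℂ] ℂ) (ψ : V₁ →ₗ[ℂ] V₁ →ₗ[ℂ] ℂ) (u : V₀ →ₗ[ℂ] V₁)
    (ustar : V₁ →ₗ[ℂ] V₀) (n : ℕ) (hn : 1 ≤ n) :
    Set ((Fin n → Submodule ℂ V₀) × (Fin n → Submodule ℂ V₁)) :=
  {EF | (∀ i : Fin n, finrank ℂ (EF.1 i) = i.1 + 1) ∧
    (∀ j : Fin n, finrank ℂ (EF.2 j) = j.1 + 1) ∧
    (∀ i j : Fin n, i ≤ j → EF.1 i ≤ EF.1 j) ∧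
    (∀ i j : Fin n, i ≤ j → EF.2 i ≤ EF.2 j) ∧
    IsTotallyIsotropic φ (EF.1 ⟨n - 1, by omega⟩) ∧
    IsTotallyIsotropic ψ (EF.2 ⟨n - 1, by omega⟩) ∧
    (∀ i : Fin n, ∀ v ∈ EF.1 i, (i.1 = 0 → u v = 0) ∧
      (0 < i.1 → u v ∈ EF.2 ⟨i.1 - 1, Nat.lt_of_le_of_lt (Nat.sub_le i.1 1) i.isLt⟩)) ∧
    (∀ i : Fin n, ∀ w ∈ EF.2 i, ustar w ∈ EF.1 i)}

def springerFlag (u : V₀ →ₗ[ℂ] V₁) (ustar : V₁ →ₗ[ℂ] V₀) (n : ℕ) (ℓ : Submodule ℂ V₀) :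
    (Fin n → Submodule ℂ V₀) × (Fin n → Submodule ℂ V₁) :=
  (fun i => ℓ ⊔ (ker ((u ∘ₗ ustar) ^ (i.1 + 1))).map ustar,
    fun i => ker ((u ∘ₗ ustar) ^ (i.1 + 1)))

variable {φ : V₀ →ₗ[ℂ] V₀ →ₗ[ℂ] ℂ} {ψ : V₁ →ₗ[ℂ] V₁ →ₗ[ℂ] ℂ} {u : V₀ →ₗ[ℂ] V₁}
  {ustar : V₁ →ₗ[ℂ] V₀} {X : Module.End ℂ (V₀ × V₁)}

theorem ker_eq_prod_of_apply_eq (hX : ∀ p : V₀ × V₁, X p = (ustar p.2, u p.1)) :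
    ker X = (ker u).prod (ker ustar) := by
  ext ⟨v, w⟩
  simp [hX, and_comm]

theorem ker_inf_even_eq (hX : ∀ p : V₀ × V₁, X p = (ustar p.2, u p.1)) :
    ker X ⊓ Vgr V₀ V₁ false = (ker u).prod ⊥ := by
  ext ⟨v, w⟩
  simp [ker_eq_prod_of_apply_eq hX, Vgr]

theorem isNilpotent_comp_of_isNilpotent (hX : ∀ p : V₀ × V₁, X p = (ustar p.2, u p.1))
    (hnil : IsNilpotent X) : IsNilpotent (u ∘ₗ ustar) := by
  obtain ⟨k, hk⟩ := hnil
  have hsq : (X ^ 2) ∘ₗ inr ℂ V₀ V₁ = inr ℂ V₀ V₁ ∘ₗ (u ∘ₗ ustar) := by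
    ext w <;> simp [pow_two, hX]
  have hpow := Module.End.commute_pow_left_of_commute hsq k
  rw [← pow_mul, mul_comm, pow_mul, hk, zero_pow two_ne_zero, zero_comp] at hpow
  exact ⟨k, LinearMap.ext fun w =>
    inr_injective (R := ℂ) (M := V₀) (by simpa using congr($hpow w).symm)⟩

theorem disjoint_ker_range_of_isAdjointPair (hadj : IsAdjointPair ψ φ ustar u)
    (hnd : ∀ x ∈ ker u, (∀ y ∈ ker u, φ x y = 0) → x = 0) : Disjoint (ker u) (range ustar) := by
  rw [disjoint_def]
  rintro _ hx ⟨w, rfl⟩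
  exact hnd _ hx fun y hy => by rw [hadj, mem_ker.mp hy, map_zero]

theorem isSkewAdjoint_comp_of_isAdjointPair (hφ : ∀ a b, φ a b = φ b a) (hψ : ψ.IsAlt)
    (hadj : IsAdjointPair ψ φ ustar u) : ψ.IsSkewAdjoint (u ∘ₗ ustar) := by
  intro x y
  rw [coe_comp, Function.comp_apply, ← hψ.neg y, ← hadj, hφ, hadj]
  simp

theorem ker_comp_eq_of_disjoint (hdisj : Disjoint (ker u) (range ustar)) :
    ker (u ∘ₗ ustar) = ker ustar :=
  le_antisymm (fun w hw => disjoint_def.mp hdisj _ hw ⟨w, rfl⟩) (ker_le_ker_comp ustar u)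

theorem ker_le_ker_comp_pow (j : ℕ) : ker ustar ≤ ker ((u ∘ₗ ustar) ^ (j + 1)) := by
  rw [pow_succ, Module.End.mul_eq_comp]
  exact ker_le_ker_comp ustar (((u ∘ₗ ustar) ^ j) ∘ₗ u)

theorem springerFlag_injective (hdisj : Disjoint (ker u) (range ustar)) {n : ℕ} (hn : 1 ≤ n) :
    Function.Injective (springerFlag u ustar n) := by
  intro ℓ₁ ℓ₂ h
  have hbot : (ker (u ∘ₗ ustar)).map ustar = ⊥ := by
    rw [← le_ker_iff_map, ker_comp_eq_of_disjoint hdisj]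
  simpa [springerFlag, hbot] using congr($h.1 ⟨0, hn⟩)

theorem finrank_map_ker_pow [FiniteDimensional ℂ V₁] (hkerust : finrank ℂ (ker ustar) = 1) {j : ℕ}
    (hY : finrank ℂ (ker ((u ∘ₗ ustar) ^ (j + 1))) = j + 1) :
    finrank ℂ ((ker ((u ∘ₗ ustar) ^ (j + 1))).map ustar) = j := by
  have := finrank_map_add_finrank_ker_of_ker_le ustar (ker_le_ker_comp_pow (u := u) j)
  omega

theorem finrank_sup_map_ker_pow [FiniteDimensional ℂ V₀] [FiniteDimensional ℂ V₁]
    (hdisj : Disjoint (ker u) (range ustar))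
    (hkerust : finrank ℂ (ker ustar) = 1) {ℓ : Submodule ℂ V₀} (hℓ : ℓ ≤ ker u)
    (hℓ1 : finrank ℂ ℓ = 1) {j : ℕ} (hY : finrank ℂ (ker ((u ∘ₗ ustar) ^ (j + 1))) = j + 1) :
    finrank ℂ ↥(ℓ ⊔ (ker ((u ∘ₗ ustar) ^ (j + 1))).map ustar) = j + 1 := by
  have h := finrank_sup_add_finrank_inf_eq ℓ ((ker ((u ∘ₗ ustar) ^ (j + 1))).map ustar)
  rw [(hdisj.mono hℓ map_le_range).eq_bot, finrank_bot, hℓ1, finrank_map_ker_pow hkerust hY] at h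
  omega

theorem springerFlag_mem [FiniteDimensional ℂ V₀] [FiniteDimensional ℂ V₁]
    (hφ : ∀ a b, φ a b = φ b a) (hadj : IsAdjointPair ψ φ ustar u)
    (hdisj : Disjoint (ker u) (range ustar)) (hkerust : finrank ℂ (ker ustar) = 1) {n : ℕ}
    (hn : 1 ≤ n) (hY : ∀ j < n, finrank ℂ (ker ((u ∘ₗ ustar) ^ (j + 1))) = j + 1)
    (hiso : IsTotallyIsotropic ψ (ker ((u ∘ₗ ustar) ^ n))) {ℓ : Submodule ℂ V₀} (hℓ : ℓ ≤ ker u)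
    (hℓ1 : finrank ℂ ℓ = 1) (hℓiso : IsTotallyIsotropic φ ℓ) :
    springerFlag u ustar n ℓ ∈ springerFiber φ ψ u ustar n hn := by
  have htop : n - 1 + 1 = n := by omega
  have hmap_u : ∀ i : ℕ, ∀ v ∈ ℓ ⊔ (ker ((u ∘ₗ ustar) ^ (i + 1))).map ustar,
      u v ∈ ker ((u ∘ₗ ustar) ^ i) := by
    intro i v hv
    obtain ⟨x, hx, _, ⟨w, hw, rfl⟩, rfl⟩ := mem_sup.mp hv
    rw [map_add, mem_ker.mp (hℓ hx), zero_add]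
    exact apply_mem_ker_pow hw
  refine ⟨fun i => finrank_sup_map_ker_pow hdisj hkerust hℓ hℓ1 (hY i i.2), fun j => hY j j.2,
    fun i j hij => sup_le_sup_left (map_mono (ker_pow_le_ker_pow _ (by omega))) _,
    fun i j hij => ker_pow_le_ker_pow _ (by omega), ?_, ?_,
    fun i v hv => ⟨fun hi => ?_, fun hi => ?_⟩, fun i w hw => mem_sup_right (mem_map_of_mem hw)⟩
  · show IsTotallyIsotropic φ (ℓ ⊔ (ker ((u ∘ₗ ustar) ^ (n - 1 + 1))).map ustar)
    rw [htop]
    refine hℓiso.sup hφ ?_ ?_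
    · rintro _ ⟨a, ha, rfl⟩ _ ⟨b, hb, rfl⟩
      rw [hadj]
      exact hiso a ha _ (apply_mem_ker_pow (ker_pow_le_ker_pow _ (Nat.le_succ n) hb))
    · rintro x hx _ ⟨b, -, rfl⟩
      rw [hφ, hadj, mem_ker.mp (hℓ hx), map_zero]
  · show IsTotallyIsotropic ψ (ker ((u ∘ₗ ustar) ^ (n - 1 + 1)))
    rwa [htop]
  · simpa [hi] using hmap_u i.1 v hv
  · show u v ∈ ker ((u ∘ₗ ustar) ^ (i.1 - 1 + 1))
    rw [Nat.sub_add_cancel hi]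
    exact hmap_u i.1 v hv

theorem snd_eq_ker_pow_of_mem [FiniteDimensional ℂ V₁] {n : ℕ} {hn : 1 ≤ n}
    (hY : ∀ j < n, finrank ℂ (ker ((u ∘ₗ ustar) ^ (j + 1))) = j + 1)
    {EF : (Fin n → Submodule ℂ V₀) × (Fin n → Submodule ℂ V₁)}
    (h : EF ∈ springerFiber φ ψ u ustar n hn) (j : Fin n) :
    EF.2 j = ker ((u ∘ₗ ustar) ^ (j.1 + 1)) := by
  obtain ⟨-, hF, -, -, -, -, hu, hus⟩ := h
  have hle : ∀ j (hj : j < n), EF.2 ⟨j, hj⟩ ≤ ker ((u ∘ₗ ustar) ^ (j + 1)) := by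
    intro j
    induction j with
    | zero => exact fun hj w hw => by simpa using (hu _ _ (hus _ w hw)).1 rfl
    | succ j ih =>
      intro hj w hw
      rw [mem_ker, pow_succ, Module.End.mul_apply]
      exact ih (by omega) ((hu _ _ (hus _ w hw)).2 j.succ_pos)
  exact eq_of_le_of_finrank_le (hle j.1 j.2) (by rw [hY j j.2, hF j])

theorem eq_springerFlag_of_mem [FiniteDimensional ℂ V₀] [FiniteDimensional ℂ V₁]
    (hdisj : Disjoint (ker u) (range ustar))
    (hkerust : finrank ℂ (ker ustar) = 1) {n : ℕ} {hn : 1 ≤ n}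
    (hY : ∀ j < n, finrank ℂ (ker ((u ∘ₗ ustar) ^ (j + 1))) = j + 1)
    {EF : (Fin n → Submodule ℂ V₀) × (Fin n → Submodule ℂ V₁)}
    (h : EF ∈ springerFiber φ ψ u ustar n hn) : EF = springerFlag u ustar n (EF.1 ⟨0, hn⟩) := by
  have hF := snd_eq_ker_pow_of_mem hY h
  obtain ⟨hE, -, hEmono, -, -, -, hu, hus⟩ := h
  have hE0 : EF.1 ⟨0, hn⟩ ≤ ker u := fun v hv => (hu _ v hv).1 rfl
  refine Prod.ext (funext fun i => ?_) (funext hF)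
  show EF.1 i = EF.1 ⟨0, hn⟩ ⊔ (ker ((u ∘ₗ ustar) ^ (i.1 + 1))).map ustar
  rw [← hF i]
  refine (eq_of_le_of_finrank_le (sup_le (hEmono _ _ (Nat.zero_le _))
    (map_le_iff_le_comap.mpr fun w hw => hus i w hw)) ?_).symm
  rw [hE i, hF i, finrank_sup_map_ker_pow hdisj hkerust hE0 (hE _) (hY i i.2)]

theorem fst_zero_mem_of_mem {n : ℕ} {hn : 1 ≤ n}
    {EF : (Fin n → Submodule ℂ V₀) × (Fin n → Submodule ℂ V₁)}
    (h : EF ∈ springerFiber φ ψ u ustar n hn) :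
    EF.1 ⟨0, hn⟩ ≤ ker u ∧ finrank ℂ (EF.1 ⟨0, hn⟩) = 1 ∧ IsTotallyIsotropic φ (EF.1 ⟨0, hn⟩) := by
  obtain ⟨hE, -, hEmono, -, hiso, -, hu, -⟩ := h
  have hle := hEmono ⟨0, hn⟩ ⟨n - 1, by omega⟩ (Nat.zero_le _)
  exact ⟨fun v hv => (hu _ v hv).1 rfl, hE _, fun x hx y hy => hiso x (hle hx) y (hle hy)⟩

theorem springerFiber_eq_image [FiniteDimensional ℂ V₀] [FiniteDimensional ℂ V₁]
    (hφ : ∀ a b, φ a b = φ b a) (hψ : ψ.IsAlt)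
    (hadj : IsAdjointPair ψ φ ustar u) (hdisj : Disjoint (ker u) (range ustar))
    (hkerust : finrank ℂ (ker ustar) = 1) (hnil : IsNilpotent (u ∘ₗ ustar)) {n : ℕ} (hn : 1 ≤ n)
    (hd1 : finrank ℂ V₁ = 2 * n) :
    springerFiber φ ψ u ustar n hn =
      springerFlag u ustar n '' {ℓ | ℓ ≤ ker u ∧ finrank ℂ ℓ = 1 ∧ IsTotallyIsotropic φ ℓ} := by
  have hker1 : finrank ℂ (ker (u ∘ₗ ustar)) = 1 := by rwa [ker_comp_eq_of_disjoint hdisj]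
  have hY : ∀ j < n, finrank ℂ (ker ((u ∘ₗ ustar) ^ (j + 1))) = j + 1 := fun j hj =>
    finrank_ker_pow_of_finrank_ker_eq_one hnil hker1 (by omega)
  have hiso : IsTotallyIsotropic ψ (ker ((u ∘ₗ ustar) ^ n)) :=
    isTotallyIsotropic_ker_pow (isSkewAdjoint_comp_of_isAdjointPair hφ hψ hadj)
      (ker_pow_eq_range_pow_of_finrank_ker_eq_one hnil hker1 hd1)
  ext EF
  constructor
  · intro h
    exact ⟨_, fst_zero_mem_of_mem h, (eq_springerFlag_of_mem hdisj hkerust hY h).symm⟩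
  · rintro ⟨ℓ, ⟨hℓ, hℓ1, hℓiso⟩, rfl⟩
    exact springerFlag_mem hφ hadj hdisj hkerust hn hY hiso hℓ hℓ1 hℓiso

end OddOrthosymplectic

/-- Let `X` be a nilpotent odd orthosymplectic endomorphism with `dim V₀ = 2n+1`,
`dim V₁ = 2n`, `n ≥ 1`, lying in the codimension-1 orbit `O₁` (characterized by
`dim Ker X = 3`, `dim(Ker X ∩ Im X) = 1`, `dim(Ker X ∩ V₀) = 2` and nondegeneracy of
`φ` on `Ker X ∩ V₀`). Then the Springer fiber `B_X` has exactly two elements. -/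
theorem springer_fiber_of_subregular_has_two_elements
    (V₀ V₁ : Type) [AddCommGroup V₀] [Module ℂ V₀] [FiniteDimensional ℂ V₀]
    [AddCommGroup V₁] [Module ℂ V₁] [FiniteDimensional ℂ V₁]
    (φ : V₀ →ₗ[ℂ] V₀ →ₗ[ℂ] ℂ) (ψ : V₁ →ₗ[ℂ] V₁ →ₗ[ℂ] ℂ)
    (hφsymm : ∀ a b : V₀, φ a b = φ b a)
    (hψalt : ∀ a : V₁, ψ a a = 0)
    (u : V₀ →ₗ[ℂ] V₁) (ustar : V₁ →ₗ[ℂ] V₀)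
    (hadj : ∀ (v : V₀) (w : V₁), φ (ustar w) v = ψ w (u v))
    (X : Module.End ℂ (V₀ × V₁))
    (hX : ∀ p : V₀ × V₁, X p = (ustar p.2, u p.1))
    (n : ℕ) (hn : 1 ≤ n)
    (hd1 : Module.finrank ℂ V₁ = 2 * n)
    (hnil : IsNilpotent X)
    (hker : Module.finrank ℂ ↥(LinearMap.ker X) = 3)
    (hker0 : Module.finrank ℂ ↥(LinearMap.ker X ⊓ Vgr V₀ V₁ false) = 2)
    (hnd : ∀ p ∈ LinearMap.ker X ⊓ Vgr V₀ V₁ false,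
      (∀ q ∈ LinearMap.ker X ⊓ Vgr V₀ V₁ false, φ p.1 q.1 = 0) → p = 0) :
    ∃ A C : (Fin n → Submodule ℂ V₀) × (Fin n → Submodule ℂ V₁), A ≠ C ∧
      {EF : (Fin n → Submodule ℂ V₀) × (Fin n → Submodule ℂ V₁) |
        (∀ i : Fin n, Module.finrank ℂ ↥(EF.1 i) = i.1 + 1) ∧
        (∀ j : Fin n, Module.finrank ℂ ↥(EF.2 j) = j.1 + 1) ∧
        (∀ i j : Fin n, i ≤ j → EF.1 i ≤ EF.1 j) ∧
        (∀ i j : Fin n, i ≤ j → EF.2 i ≤ EF.2 j) ∧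
        (∀ v ∈ EF.1 ⟨n - 1, by omega⟩, ∀ v' ∈ EF.1 ⟨n - 1, by omega⟩, φ v v' = 0) ∧
        (∀ w ∈ EF.2 ⟨n - 1, by omega⟩, ∀ w' ∈ EF.2 ⟨n - 1, by omega⟩, ψ w w' = 0) ∧
        (∀ i : Fin n, ∀ v ∈ EF.1 i, (i.1 = 0 → u v = 0) ∧
          (0 < i.1 → u v ∈ EF.2 ⟨i.1 - 1, Nat.lt_of_le_of_lt (Nat.sub_le i.1 1) i.isLt⟩)) ∧
        (∀ i : Fin n, ∀ w ∈ EF.2 i, ustar w ∈ EF.1 i)}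
      = {A, C} := by
  rw [ker_inf_even_eq hX] at hker0 hnd
  have hkeru : finrank ℂ (ker u) = 2 := by simpa [Submodule.finrank_prod] using hker0
  have hkerust : finrank ℂ (ker ustar) = 1 := by
    rw [ker_eq_prod_of_apply_eq hX, Submodule.finrank_prod, hkeru] at hker
    omega
  have hndu : ∀ x ∈ ker u, (∀ y ∈ ker u, φ x y = 0) → x = 0 := fun x hx h =>
    congrArg Prod.fst (hnd (x, 0) ⟨hx, zero_mem _⟩ fun q hq => h q.1 hq.1)
  have hadj' : IsAdjointPair ψ φ ustar u := fun w v => hadj v w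
  have hdisj := disjoint_ker_range_of_isAdjointPair hadj' hndu
  obtain ⟨ℓ₁, ℓ₂, hne, hlines⟩ := exists_isotropic_lines_of_finrank_eq_two hφsymm hkeru hndu
  refine ⟨_, _, (springerFlag_injective hdisj hn).ne hne, ?_⟩
  change springerFiber φ ψ u ustar n hn = _
  rw [springerFiber_eq_image hφsymm hψalt hadj' hdisj hkerust
    (isNilpotent_comp_of_isNilpotent hX hnil) hn hd1, hlines, Set.image_pair]
end

section
/- Let X be an odd orthosymplectic endomorphism and let x ∈ V_ε (ε ∈ {0,1}) be a nonzero vector with X(x) = 0 and B(x,x) = 0. Then: x ∈ x^⊥; X(x^⊥) ⊆ x^⊥; B induces a well-defined nondegenerate bilinear form B̄ on W = x^⊥/ℂx; writing W_δ for the image of x^⊥ ∩ V_δ in W (δ ∈ {0,1}), one has W = W₀ ⊕ W₁ with W₀ and W₁ B̄-orthogonal, the restriction φ̄ of B̄ to W₀ symmetric and nondegenerate, the restriction ψ̄ of B̄ to W₁ alternating and nondegenerate, dim W_ε = dim V_ε − 2 and dim W_{1−ε} = dim V_{1−ε}; and the map Z : W → W induced by X satisfies Z(W₀) ⊆ W₁,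 Z(W₁) ⊆ W₀ and φ̄(Z(w), v) = ψ̄(w, Z(v)) for all v ∈ W₀, w ∈ W₁ (so Z is again an odd orthosymplectic endomorphism for this induced structure). -/
/-! Since `x` is homogeneous, `B(z, x) = ±B(x, z)`, so `ℂx` lies in the radical of `B` on `x^⊥` from
both sides and `B` descends to `W = x^⊥/ℂx`. If `z ∈ x^⊥` is orthogonal to all of `x^⊥`, then
`B(z, ·)` vanishes on the hyperplane `ker B(x, ·)`, hence `B(z, ·) = c B(x, ·)` and `z = c x` by
nondegeneracy. Since `V_{1-ε} ⊆ x^⊥` meets `ℂx` trivially, `x^⊥ = (x^⊥ ∩ V_ε) ⊕ V_{1-ε}` maps onto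
`W = W_ε ⊕ W_{1-ε}` with `W_{1-ε} ≅ V_{1-ε}`, and `dim W = dim V - 2` gives `dim W_ε = dim V_ε - 2`.
Finally `X x = 0` and the adjunction put `X V` inside `x^⊥`, so `X` descends to `W` keeping its
parity and adjunction. -/

open Module LinearMap Submodule

theorem LinearMap.SeparatingLeft.eq_zero_of_codisjoint {R M : Type*} [CommRing R]
    [AddCommGroup M] [Module R M] {B : M →ₗ[R] M →ₗ[R] R} (hB : B.SeparatingLeft)
    {A C : Submodule R M} (hAC : Codisjoint A C) (horth : ∀ a ∈ A, ∀ c ∈ C, B a c = 0) :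
    ∀ a ∈ A, (∀ b ∈ A, B a b = 0) → a = 0 := by
  intro a ha h
  refine hB a fun y => ?_
  obtain ⟨b, c, hb, hc, rfl⟩ := codisjoint_iff_exists_add_eq.mp hAC y
  rw [map_add, h b hb, horth a ha c hc, add_zero]

namespace Submodule

section Ring

variable {R V : Type*} [Ring R] [AddCommGroup V] [Module R V]

theorem isCompl_map_mkQ_comap_subtype {P N N' : Submodule R V} {x : V} (hN : IsCompl N N')
    (hx : x ∈ N) (hN' : N' ≤ P) :
    IsCompl ((N.comap P.subtype).map ((R ∙ x).comap P.subtype).mkQ)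
      ((N'.comap P.subtype).map ((R ∙ x).comap P.subtype).mkQ) := by
  set L := (R ∙ x).comap P.subtype
  constructor
  · rw [disjoint_def]
    rintro _ ⟨a, ha, rfl⟩ ⟨b, hb, hba⟩
    have hline : (b : V) - a ∈ R ∙ x := (Quotient.eq L).mp hba
    have hbN : (b : V) ∈ N := by
      simpa using N.add_mem (span_le.mpr (Set.singleton_subset_iff.mpr hx) hline) ha
    have hb0 : b = 0 := Subtype.ext (disjoint_def.mp hN.disjoint _ hbN hb)
    rw [← hba, hb0, map_zero]
  · rw [codisjoint_iff_exists_add_eq]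
    intro p
    obtain ⟨z, rfl⟩ := L.mkQ_surjective p
    obtain ⟨a, b, ha, hb, hab⟩ := codisjoint_iff_exists_add_eq.mp hN.codisjoint (z : V)
    have haP : a ∈ P := by simpa [← hab] using P.sub_mem z.2 (hN' hb)
    refine ⟨L.mkQ ⟨a, haP⟩, L.mkQ ⟨b, hN' hb⟩, mem_map_of_mem ha, mem_map_of_mem hb, ?_⟩
    rw [← map_add]
    exact congrArg L.mkQ (Subtype.ext hab)

end Ring

section Field

variable {K V : Type*} [Field K] [AddCommGroup V] [Module K V]

theorem finrank_map_mkQ_comap_subtype_of_disjoint {P N : Submodule K V} {x : V} (hN : N ≤ P)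
    (hx : Disjoint N (K ∙ x)) :
    finrank K ((N.comap P.subtype).map ((K ∙ x).comap P.subtype).mkQ) = finrank K N := by
  set L := (K ∙ x).comap P.subtype
  have hinj : Function.Injective (L.mkQ ∘ₗ inclusion hN) := by
    rw [← LinearMap.ker_eq_bot, eq_bot_iff]
    intro n hn
    have hline : (n : V) ∈ K ∙ x := (Quotient.mk_eq_zero L).mp hn
    exact (mem_bot K).mpr (Subtype.ext (disjoint_def.mp hx _ n.2 hline))
  rw [← range_inclusion N P hN, ← LinearMap.range_comp, LinearMap.finrank_range_of_inj hinj]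

theorem finrank_quotient_line_add_two [FiniteDimensional K V] {f : Module.Dual K V} (hf : f ≠ 0)
    {x : V} (hx : f x = 0) (hx0 : x ≠ 0) :
    finrank K (ker f ⧸ (K ∙ x).comap (ker f).subtype) + 2 = finrank K V := by
  have hline : finrank K ((K ∙ x).comap (ker f).subtype) = 1 := by
    rw [(comapSubtypeEquivOfLe ((span_singleton_le_iff_mem _ _).mpr hx)).finrank_eq,
      finrank_span_singleton hx0]
  have := ((K ∙ x).comap (ker f).subtype).finrank_quotient_add_finrank
  have := f.finrank_ker_add_one_of_ne_zero hf
  omega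

theorem finrank_map_mkQ_comap_ker [FiniteDimensional K V] {f : Module.Dual K V} (hf : f ≠ 0)
    {x : V} (hx : f x = 0) (hx0 : x ≠ 0) {N N' : Submodule K V} (hN : IsCompl N N')
    (hxN : x ∈ N) (hN' : N' ≤ ker f) :
    finrank K ((N.comap (ker f).subtype).map ((K ∙ x).comap (ker f).subtype).mkQ) + 2
        = finrank K N ∧
      finrank K ((N'.comap (ker f).subtype).map ((K ∙ x).comap (ker f).subtype).mkQ)
        = finrank K N' := by
  have hN'dim := finrank_map_mkQ_comap_subtype_of_disjoint hN'
    (hN.symm.disjoint.mono_right ((span_singleton_le_iff_mem _ _).mpr hxN))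
  have hquot := finrank_add_eq_of_isCompl (isCompl_map_mkQ_comap_subtype hN hxN hN')
  have := finrank_add_eq_of_isCompl hN
  have := finrank_quotient_line_add_two hf hx hx0
  omega

end Field

end Submodule

namespace Module.End

variable {R V : Type*} [CommRing R] [AddCommGroup V] [Module R V]

def restrictQuotLine (X : Module.End R V) {P : Submodule R V} (hP : ∀ z ∈ P, X z ∈ P) {x : V}
    (hx : X x ∈ R ∙ x) : Module.End R (P ⧸ (R ∙ x).comap P.subtype) :=
  ((R ∙ x).comap P.subtype).mapQ _ (X.restrict hP) fun z hz => by
    obtain ⟨c, hc⟩ : ∃ c : R, c • x = z := mem_span_singleton.mp hz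
    change X z ∈ R ∙ x
    rw [← hc, map_smul]
    exact (R ∙ x).smul_mem c hx

theorem restrictQuotLine_mk (X : Module.End R V) {P : Submodule R V} (hP : ∀ z ∈ P, X z ∈ P)
    {x : V} (hx : X x ∈ R ∙ x) (z : P) :
    X.restrictQuotLine hP hx (((R ∙ x).comap P.subtype).mkQ z)
      = ((R ∙ x).comap P.subtype).mkQ ⟨X z, hP z z.2⟩ :=
  rfl

theorem map_restrictQuotLine_le (X : Module.End R V) {P : Submodule R V}
    (hP : ∀ z ∈ P, X z ∈ P) {x : V} (hx : X x ∈ R ∙ x) {N N' : Submodule R V}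
    (hN : ∀ n ∈ N, X n ∈ N') :
    ((N.comap P.subtype).map ((R ∙ x).comap P.subtype).mkQ).map (X.restrictQuotLine hP hx)
      ≤ (N'.comap P.subtype).map ((R ∙ x).comap P.subtype).mkQ := by
  rintro _ ⟨_, ⟨a, ha, rfl⟩, rfl⟩
  exact ⟨⟨X a, hP a a.2⟩, hN a ha, rfl⟩

end Module.End

namespace LinearMap

variable {R V : Type*} [CommRing R] [AddCommGroup V] [Module R V]

/-- The form induced by `B` on `x^⊥ / R x`; `hx` stands in for reflexivity of `B`, which
super-symmetric forms lack. -/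
def perpQuotForm (B : V →ₗ[R] V →ₗ[R] R) (x : V) (hx : ∀ z, B x z = 0 → B z x = 0) :
    (ker (B x) ⧸ (R ∙ x).comap (ker (B x)).subtype) →ₗ[R]
      (ker (B x) ⧸ (R ∙ x).comap (ker (B x)).subtype) →ₗ[R] R :=
  (B.compl₁₂ (ker (B x)).subtype (ker (B x)).subtype).liftQ₂ _ _
    (fun z hz => by
      obtain ⟨c, hc⟩ := mem_span_singleton.mp hz
      ext w
      simp [← hc])
    (fun z hz => by
      obtain ⟨c, hc⟩ := mem_span_singleton.mp hz
      ext w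
      simp [← hc, hx _ w.2])

theorem perpQuotForm_mk (B : V →ₗ[R] V →ₗ[R] R) (x : V) (hx : ∀ z, B x z = 0 → B z x = 0)
    (z w : ker (B x)) :
    perpQuotForm B x hx (mkQ _ z) (mkQ _ w) = B z w :=
  rfl

theorem perpQuotForm_separatingLeft {K V : Type*} [Field K] [AddCommGroup V] [Module K V]
    {B : V →ₗ[K] V →ₗ[K] K} (hB : B.SeparatingLeft) (x : V)
    (hx : ∀ z, B x z = 0 → B z x = 0) : (perpQuotForm B x hx).SeparatingLeft := by
  intro p hp
  obtain ⟨z, rfl⟩ := mkQ_surjective _ p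
  have hker : ker (B x) ≤ ker (B z) := fun w hw => hp (mkQ _ ⟨w, hw⟩)
  obtain ⟨c, hc⟩ : ∃ c : K, c • B x = B z := by
    have := mem_span_of_iInf_ker_le_ker (ι := Unit) (L := fun _ => B x) (by simpa using hker)
    simpa [Set.range_const, mem_span_singleton] using this
  have hz : (z : V) = c • x := sub_eq_zero.mp (hB _ fun w => by simp [← hc])
  exact (Quotient.mk_eq_zero _).mpr (mem_span_singleton.mpr ⟨c, hz.symm⟩)

end LinearMap

def superForm {R V₀ V₁ : Type*} [CommRing R] [AddCommGroup V₀] [Module R V₀] [AddCommGroup V₁]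
    [Module R V₁] (φ : V₀ →ₗ[R] V₀ →ₗ[R] R) (ψ : V₁ →ₗ[R] V₁ →ₗ[R] R) :
    V₀ × V₁ →ₗ[R] V₀ × V₁ →ₗ[R] R :=
  φ.compl₁₂ (fst R V₀ V₁) (fst R V₀ V₁) + ψ.compl₁₂ (snd R V₀ V₁) (snd R V₀ V₁)

section Orthosymplectic

variable {V₀ V₁ : Type} [AddCommGroup V₀] [Module ℂ V₀] [AddCommGroup V₁] [Module ℂ V₁]
  {φ : V₀ →ₗ[ℂ] V₀ →ₗ[ℂ] ℂ} {ψ : V₁ →ₗ[ℂ] V₁ →ₗ[ℂ] ℂ}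

theorem superForm_apply (p q : V₀ × V₁) : superForm φ ψ p q = Bform φ ψ p q :=
  rfl

@[simp]
theorem mem_Vgr_false {p : V₀ × V₁} : p ∈ Vgr V₀ V₁ false ↔ p.2 = 0 := by
  simp [Vgr, mem_prod]

@[simp]
theorem mem_Vgr_true {p : V₀ × V₁} : p ∈ Vgr V₀ V₁ true ↔ p.1 = 0 := by
  simp [Vgr, mem_prod]

theorem isCompl_Vgr (δ : Bool) : IsCompl (Vgr V₀ V₁ δ) (Vgr V₀ V₁ !δ) := by
  have h : IsCompl (Vgr V₀ V₁ false) (Vgr V₀ V₁ true) := by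
    simp only [Vgr, Bool.false_eq_true, if_false, if_true]
    exact ⟨by rw [disjoint_iff, prod_inf_prod]; simp, by rw [codisjoint_iff, prod_sup_prod]; simp⟩
  cases δ
  exacts [h, h.symm]

theorem superForm_eq_zero_of_mem_Vgr {δ : Bool} {p q : V₀ × V₁} (hp : p ∈ Vgr V₀ V₁ δ)
    (hq : q ∈ Vgr V₀ V₁ !δ) : superForm φ ψ p q = 0 := by
  cases δ <;> simp_all [superForm_apply, Bform]

theorem superForm_comm_of_mem_Vgr_false (hφ : ∀ a b : V₀, φ a b = φ b a) {p q : V₀ × V₁}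
    (hp : p ∈ Vgr V₀ V₁ false) (hq : q ∈ Vgr V₀ V₁ false) :
    superForm φ ψ p q = superForm φ ψ q p := by
  simp_all [superForm_apply, Bform]

theorem superForm_self_eq_zero_of_mem_Vgr_true (hψ : ψ.IsAlt) {p : V₀ × V₁}
    (hp : p ∈ Vgr V₀ V₁ true) : superForm φ ψ p p = 0 := by
  simp_all [superForm_apply, Bform, hψ.self_eq_zero]

theorem superForm_eq_zero_symm_of_mem_Vgr (hφ : φ.IsRefl) (hψ : ψ.IsRefl) {ε : Bool}
    {x : V₀ × V₁} (hx : x ∈ Vgr V₀ V₁ ε) (z : V₀ × V₁) :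
    superForm φ ψ x z = 0 → superForm φ ψ z x = 0 := by
  cases ε <;> simp_all [superForm_apply, Bform] <;> first | exact hφ _ _ | exact hψ _ _

theorem superForm_separatingLeft (hφ : φ.SeparatingLeft) (hψ : ψ.SeparatingLeft) :
    (superForm φ ψ).SeparatingLeft := by
  intro p hp
  have h₀ : p.1 = 0 := hφ _ fun b => by simpa [superForm_apply, Bform] using hp (b, 0)
  have h₁ : p.2 = 0 := hψ _ fun b => by simpa [superForm_apply, Bform] using hp (0, b)
  exact Prod.ext h₀ h₁

variable {u : V₀ →ₗ[ℂ] V₁} {ustar : V₁ →ₗ[ℂ] V₀} {X : Module.End ℂ (V₀ × V₁)}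

theorem apply_mem_Vgr_not (hX : ∀ p : V₀ × V₁, X p = (ustar p.2, u p.1)) {δ : Bool}
    {p : V₀ × V₁} (hp : p ∈ Vgr V₀ V₁ δ) : X p ∈ Vgr V₀ V₁ !δ := by
  cases δ <;> simp_all

theorem superForm_apply_eq_zero_of_apply_eq_zero (hφ : φ.IsRefl)
    (hadj : ∀ (v : V₀) (w : V₁), φ (ustar w) v = ψ w (u v))
    (hX : ∀ p : V₀ × V₁, X p = (ustar p.2, u p.1)) {x : V₀ × V₁} (hXx : X x = 0)
    (z : V₀ × V₁) : superForm φ ψ x (X z) = 0 := by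
  obtain ⟨hx₁, hx₀⟩ : ustar x.2 = 0 ∧ u x.1 = 0 := by simpa [hX] using hXx
  have h₀ : φ x.1 (ustar z.2) = 0 := hφ _ _ (by rw [hadj, hx₀, map_zero])
  have h₁ : ψ x.2 (u z.1) = 0 := by rw [← hadj, hx₁, map_zero, LinearMap.zero_apply]
  simp [superForm_apply, Bform, hX, h₀, h₁]

theorem superForm_apply_left_eq_apply_right
    (hadj : ∀ (v : V₀) (w : V₁), φ (ustar w) v = ψ w (u v))
    (hX : ∀ p : V₀ × V₁, X p = (ustar p.2, u p.1)) {p q : V₀ × V₁}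
    (hp : p ∈ Vgr V₀ V₁ false) (hq : q ∈ Vgr V₀ V₁ true) :
    superForm φ ψ (X q) p = superForm φ ψ q (X p) := by
  simp_all [superForm_apply, Bform]

/-- The image `W_δ` of `x^⊥ ∩ V_δ` in `x^⊥ / ℂx`. -/
noncomputable abbrev quotVgr (φ : V₀ →ₗ[ℂ] V₀ →ₗ[ℂ] ℂ) (ψ : V₁ →ₗ[ℂ] V₁ →ₗ[ℂ] ℂ) (x : V₀ × V₁)
    (δ : Bool) :
    Submodule ℂ (perp φ ψ x ⧸ (ℂ ∙ x).comap (perp φ ψ x).subtype) :=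
  ((Vgr V₀ V₁ δ).comap (perp φ ψ x).subtype).map ((ℂ ∙ x).comap (perp φ ψ x).subtype).mkQ

theorem isCompl_quotVgr {ε : Bool} {x : V₀ × V₁} (hxε : x ∈ Vgr V₀ V₁ ε) (δ : Bool) :
    IsCompl (quotVgr φ ψ x δ) (quotVgr φ ψ x !δ) := by
  have h := isCompl_map_mkQ_comap_subtype (P := perp φ ψ x) (isCompl_Vgr ε) hxε
    fun _ => superForm_eq_zero_of_mem_Vgr hxε
  rcases Bool.eq_or_eq_not δ ε with rfl | rfl
  exacts [h, by simpa using h.symm]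

theorem perpQuotForm_eq_zero_of_mem_quotVgr {x : V₀ × V₁}
    (hx : ∀ z, superForm φ ψ x z = 0 → superForm φ ψ z x = 0) (δ : Bool) :
    ∀ p ∈ quotVgr φ ψ x δ, ∀ q ∈ quotVgr φ ψ x !δ, perpQuotForm (superForm φ ψ) x hx p q = 0 := by
  rintro _ ⟨a, ha, rfl⟩ _ ⟨b, hb, rfl⟩
  exact superForm_eq_zero_of_mem_Vgr ha hb

theorem finrank_quotVgr [FiniteDimensional ℂ V₀] [FiniteDimensional ℂ V₁] {ε : Bool}
    {x : V₀ × V₁} (hxε : x ∈ Vgr V₀ V₁ ε) (hiso : superForm φ ψ x x = 0)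
    (hx : superForm φ ψ x ≠ 0) :
    finrank ℂ (quotVgr φ ψ x ε) + 2 = finrank ℂ (Vgr V₀ V₁ ε) ∧
      finrank ℂ (quotVgr φ ψ x !ε) = finrank ℂ (Vgr V₀ V₁ !ε) :=
  finrank_map_mkQ_comap_ker hx hiso (fun h => hx (by rw [h, map_zero])) (isCompl_Vgr ε) hxε
    fun _ => superForm_eq_zero_of_mem_Vgr hxε

end Orthosymplectic

/-- Let `X` be odd orthosymplectic and `x ∈ V_ε` a nonzero isotropic vector with
`X(x) = 0`. Then `x ∈ x^⊥`, `X(x^⊥) ⊆ x^⊥`, `B` induces a well-defined nondegenerate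
bilinear form `B̄` on `W = x^⊥/ℂx`, `W` is the orthogonal direct sum of `W₀` and `W₁`
(the images of `x^⊥ ∩ V₀` and `x^⊥ ∩ V₁`), on which `B̄` restricts to a nondegenerate
symmetric (resp. alternating) form, `dim W_ε = dim V_ε − 2`, `dim W_{1−ε} = dim V_{1−ε}`,
and the induced map `Z` on `W` is again an odd orthosymplectic endomorphism. -/
theorem quotient_perp_is_orthosymplectic
    (V₀ V₁ : Type) [AddCommGroup V₀] [Module ℂ V₀] [FiniteDimensional ℂ V₀]
    [AddCommGroup V₁] [Module ℂ V₁] [FiniteDimensional ℂ V₁]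
    (φ : V₀ →ₗ[ℂ] V₀ →ₗ[ℂ] ℂ) (ψ : V₁ →ₗ[ℂ] V₁ →ₗ[ℂ] ℂ)
    (hφsymm : ∀ a b : V₀, φ a b = φ b a)
    (hφnd : ∀ a : V₀, (∀ b : V₀, φ a b = 0) → a = 0)
    (hψalt : ∀ a : V₁, ψ a a = 0)
    (hψnd : ∀ a : V₁, (∀ b : V₁, ψ a b = 0) → a = 0)
    (u : V₀ →ₗ[ℂ] V₁) (ustar : V₁ →ₗ[ℂ] V₀)
    (hadj : ∀ (v : V₀) (w : V₁), φ (ustar w) v = ψ w (u v))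
    (X : Module.End ℂ (V₀ × V₁))
    (hX : ∀ p : V₀ × V₁, X p = (ustar p.2, u p.1))
    (x : V₀ × V₁) (hx0 : x ≠ 0) (ε : Bool) (hxε : x ∈ Vgr V₀ V₁ ε)
    (hXx : X x = 0) (hiso : Bform φ ψ x x = 0)
    (L : Submodule ℂ ↥(perp φ ψ x))
    (hL : L = Submodule.comap (perp φ ψ x).subtype (Submodule.span ℂ {x}))
    (W0 W1 : Submodule ℂ (↥(perp φ ψ x) ⧸ L))
    (hW0 : W0 =
      Submodule.map L.mkQ (Submodule.comap (perp φ ψ x).subtype (Vgr V₀ V₁ false)))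
    (hW1 : W1 =
      Submodule.map L.mkQ (Submodule.comap (perp φ ψ x).subtype (Vgr V₀ V₁ true))) :
    x ∈ perp φ ψ x ∧
    (∀ z ∈ perp φ ψ x, X z ∈ perp φ ψ x) ∧
    ∃ Bbar : (↥(perp φ ψ x) ⧸ L) →ₗ[ℂ] (↥(perp φ ψ x) ⧸ L) →ₗ[ℂ] ℂ,
      (∀ z w : ↥(perp φ ψ x), Bbar (L.mkQ z) (L.mkQ w) = Bform φ ψ ↑z ↑w) ∧
      (∀ p, (∀ q, Bbar p q = 0) → p = 0) ∧
      W0 ⊔ W1 = ⊤ ∧ W0 ⊓ W1 = ⊥ ∧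
      (∀ p ∈ W0, ∀ q ∈ W1, Bbar p q = 0 ∧ Bbar q p = 0) ∧
      (∀ p ∈ W0, ∀ q ∈ W0, Bbar p q = Bbar q p) ∧
      (∀ p ∈ W0, (∀ q ∈ W0, Bbar p q = 0) → p = 0) ∧
      (∀ q ∈ W1, Bbar q q = 0) ∧
      (∀ p ∈ W1, (∀ q ∈ W1, Bbar p q = 0) → p = 0) ∧
      Module.finrank ℂ ↥(if ε then W1 else W0) + 2
          = Module.finrank ℂ ↥(Vgr V₀ V₁ ε) ∧
      Module.finrank ℂ ↥(if ε then W0 else W1)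
          = Module.finrank ℂ ↥(Vgr V₀ V₁ (!ε)) ∧
      ∃ Z : Module.End ℂ (↥(perp φ ψ x) ⧸ L),
        (∀ z w : ↥(perp φ ψ x), (w : V₀ × V₁) = X ↑z → Z (L.mkQ z) = L.mkQ w) ∧
        Submodule.map Z W0 ≤ W1 ∧ Submodule.map Z W1 ≤ W0 ∧
        (∀ p ∈ W0, ∀ q ∈ W1, Bbar (Z q) p = Bbar q (Z p)) := by
  subst hL hW0 hW1
  have hφ : φ.IsRefl := fun a b h => by rwa [hφsymm]
  have hxx := superForm_eq_zero_symm_of_mem_Vgr hφ (LinearMap.IsAlt.isRefl hψalt) hxε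
  have hsep := superForm_separatingLeft (φ := φ) (ψ := ψ) hφnd hψnd
  have hBbar_sep := perpQuotForm_separatingLeft hsep x hxx
  have hcompl := isCompl_quotVgr (φ := φ) (ψ := ψ) hxε
  have horth := perpQuotForm_eq_zero_of_mem_quotVgr hxx
  have hdim := finrank_quotVgr hxε hiso fun h =>
    hx0 (hsep x fun y => by rw [h, LinearMap.zero_apply])
  have hXP : ∀ z, X z ∈ perp φ ψ x := superForm_apply_eq_zero_of_apply_eq_zero hφ hadj hX hXx
  refine ⟨hiso, fun z _ => hXP z, _, perpQuotForm_mk _ x hxx, hBbar_sep,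
    (hcompl false).sup_eq_top, (hcompl false).inf_eq_bot,
    fun p hp q hq => ⟨horth false p hp q hq, horth true q hq p hp⟩, ?_,
    hBbar_sep.eq_zero_of_codisjoint (hcompl false).codisjoint (horth false), ?_,
    hBbar_sep.eq_zero_of_codisjoint (hcompl true).codisjoint (horth true),
    by cases ε <;> exact hdim.1, by cases ε <;> exact hdim.2,
    X.restrictQuotLine (fun z _ => hXP z) (by rw [hXx]; exact zero_mem _),
    fun z w hw => (X.restrictQuotLine_mk _ _ z).trans (congrArg _ (Subtype.ext hw.symm)),
    X.map_restrictQuotLine_le _ _ fun _ => apply_mem_Vgr_not hX,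
    X.map_restrictQuotLine_le _ _ fun _ => apply_mem_Vgr_not hX, ?_⟩
  · rintro _ ⟨a, ha, rfl⟩ _ ⟨b, hb, rfl⟩
    exact superForm_comm_of_mem_Vgr_false hφsymm ha hb
  · rintro _ ⟨b, hb, rfl⟩
    exact superForm_self_eq_zero_of_mem_Vgr_true hψalt hb
  · rintro _ ⟨a, ha, rfl⟩ _ ⟨b, hb, rfl⟩
    exact superForm_apply_left_eq_apply_right hadj hX ha hb
end

section
/- A marked diagram D is admissible if and only if the following counting conditions hold: for every even length ℓ, the number of lines (ℓ, 0) in D equals the number of lines (ℓ, 1); for every length ℓ ≡ 1 (mod 4), the number of lines (ℓ, 1) in D is even; and for every length ℓ ≡ 3 (mod 4), the number of lines (ℓ, 0) in D is even. -/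
/-- A marked line is a pair `(ℓ, ε)`; a marked diagram is a finite multiset of marked lines.
`IndecompD D` says that `D` is one of the five indecomposable diagrams. -/
def IndecompD (D : Multiset (ℕ × Bool)) : Prop :=
  (∃ p : ℕ, D = {(4 * p + 1, false)}) ∨
  (∃ p : ℕ, 1 ≤ p ∧ D = {(4 * p - 1, true)}) ∨
  (∃ p : ℕ, 1 ≤ p ∧ D = {(4 * p - 1, false), (4 * p - 1, false)}) ∨
  (∃ p : ℕ, D = {(4 * p + 1, true), (4 * p + 1, true)}) ∨
  (∃ p : ℕ, 1 ≤ p ∧ D = {(2 * p, false), (2 * p, true)})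

/-- A marked diagram is admissible if it is a multiset sum of indecomposable diagrams. -/
def AdmissibleD (D : Multiset (ℕ × Bool)) : Prop :=
  ∃ L : Multiset (Multiset (ℕ × Bool)), (∀ d ∈ L, IndecompD d) ∧ L.sum = D

/-- The number of boxes of `D` labelled `b` (a line `(ℓ, ε)` has `⌈ℓ/2⌉` boxes labelled `ε`
and `⌊ℓ/2⌋` boxes labelled `1 − ε`). -/
def sizeD (b : Bool) (D : Multiset (ℕ × Bool)) : ℕ :=
  (D.map (fun l => if l.2 = b then (l.1 + 1) / 2 else l.1 / 2)).sum

/-- `D` has parity `ε` if its size is `(2m + (−1)^ε, 2m)` for some `m`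
(here `false` plays the role of `ε = 0` and `true` of `ε = 1`). -/
def HasParityD (ε : Bool) (D : Multiset (ℕ × Bool)) : Prop :=
  ∃ m : ℕ, sizeD true D = 2 * m ∧
    (if ε then sizeD false D + 1 = 2 * m else sizeD false D = 2 * m + 1)

/-- The two replacement moves applied to lines of length `k`: either replace one line
`(k, ε')` with `k ≥ 2` by `(k − 2, !ε')` (the line disappears if `k = 2`), or replace two
lines `(k, ε')`, `(k, ε'')` by `(k − 1, !ε')` and `(k − 1, ε'')` (discarded if `k = 1`). -/
def MoveAtD (k : ℕ) (D D' : Multiset (ℕ × Bool)) : Prop :=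
  (∃ ε' : Bool, 2 ≤ k ∧ (k, ε') ∈ D ∧
    D' = D.erase (k, ε') + (if k = 2 then 0 else {(k - 2, !ε')})) ∨
  (∃ ε' ε'' : Bool, (k, ε') ∈ D ∧ (k, ε'') ∈ D.erase (k, ε') ∧
    D' = (D.erase (k, ε')).erase (k, ε'') +
      (if k = 1 then 0 else {(k - 1, !ε'), (k - 1, ε'')}))

/-- `D'` is an admissible subdiagram of `D` with the removed boxes lying on lines of
length `k`. -/
def SubdiagAtD (k : ℕ) (D D' : Multiset (ℕ × Bool)) : Prop :=
  AdmissibleD D' ∧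
  sizeD false D' + sizeD true D' + 2 = sizeD false D + sizeD true D ∧
  (∃ ε : Bool, HasParityD ε D ∧ HasParityD (!ε) D') ∧
  MoveAtD k D D'

/-- `D'` is an admissible subdiagram of `D`. -/
def SubdiagD (D D' : Multiset (ℕ × Bool)) : Prop := ∃ k : ℕ, SubdiagAtD k D D'

/-- The set of admissible slicings of a diagram `D` of size `(2n+1, 2n)`: sequences
`D = D₀ ⊃ D₁ ⊃ … ⊃ D_{2n}` where each `Dᵢ` is an admissible subdiagram of `D_{i−1}`. -/
def SlicingsD (n : ℕ) (D : Multiset (ℕ × Bool)) :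
    Set (Fin (2 * n + 1) → Multiset (ℕ × Bool)) :=
  {s | s 0 = D ∧ ∀ i : Fin (2 * n), SubdiagD (s i.castSucc) (s i.succ)}

/-! Every indecomposable diagram satisfies the counting conditions and they are additive, which
gives one direction. Conversely, any line `(ℓ, ε)` of a nonempty diagram satisfying them lies in
an indecomposable subdiagram: its partner `(ℓ, !ε)` is present when `ℓ` is even, a second copy of
it is present by the parity condition when `ℓ` is odd and `(ℓ, ε)` is not itself indecomposable.
Removing that subdiagram preserves the conditions, so induction on the diagram concludes. -/

def CountingConditions (D : Multiset (ℕ × Bool)) : Prop :=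
  (∀ l : ℕ, l % 2 = 0 → D.count (l, false) = D.count (l, true)) ∧
  (∀ l : ℕ, l % 4 = 1 → Even (D.count (l, true))) ∧
  (∀ l : ℕ, l % 4 = 3 → Even (D.count (l, false)))

namespace CountingConditions

theorem zero : CountingConditions 0 :=
  ⟨fun _ _ => rfl, fun _ _ => .zero, fun _ _ => .zero⟩

theorem add {D₁ D₂ : Multiset (ℕ × Bool)} (h₁ : CountingConditions D₁)
    (h₂ : CountingConditions D₂) : CountingConditions (D₁ + D₂) := by
  obtain ⟨even₁, one₁, three₁⟩ := h₁
  obtain ⟨even₂, one₂, three₂⟩ := h₂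
  simp only [CountingConditions, Multiset.count_add]
  exact ⟨fun l hl => by rw [even₁ l hl, even₂ l hl], fun l hl => (one₁ l hl).add (one₂ l hl),
    fun l hl => (three₁ l hl).add (three₂ l hl)⟩

theorem of_add {D₁ D₂ : Multiset (ℕ × Bool)} (h : CountingConditions (D₁ + D₂))
    (h₁ : CountingConditions D₁) : CountingConditions D₂ := by
  obtain ⟨even, one, three⟩ := h
  obtain ⟨even₁, one₁, three₁⟩ := h₁
  simp only [CountingConditions, Multiset.count_add] at *
  refine ⟨fun l hl => ?_, fun l hl => ?_, fun l hl => ?_⟩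
  · have := even l hl
    have := even₁ l hl
    omega
  · exact (Nat.even_add.mp (one l hl)).mp (one₁ l hl)
  · exact (Nat.even_add.mp (three l hl)).mp (three₁ l hl)

end CountingConditions

theorem count_pair (a x y : ℕ × Bool) :
    ({x, y} : Multiset (ℕ × Bool)).count a =
      (if a = x then 1 else 0) + (if a = y then 1 else 0) := by
  rw [Multiset.insert_eq_cons, Multiset.count_cons, Multiset.count_singleton]
  omega

theorem IndecompD.countingConditions {d : Multiset (ℕ × Bool)} (h : IndecompD d) :
    CountingConditions d := by
  rcases h with ⟨p, rfl⟩ | ⟨p, hp, rfl⟩ | ⟨p, hp, rfl⟩ | ⟨p, rfl⟩ | ⟨p, hp, rfl⟩ <;>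
    refine ⟨fun l hl => ?_, fun l hl => ?_, fun l hl => ?_⟩ <;>
    simp only [Multiset.count_singleton, count_pair, Prod.mk.injEq] <;>
    split_ifs <;> simp_all <;> omega

theorem AdmissibleD.countingConditions {D : Multiset (ℕ × Bool)} (h : AdmissibleD D) :
    CountingConditions D := by
  obtain ⟨L, hL, rfl⟩ := h
  exact Multiset.sum_induction _ _ (fun _ _ => CountingConditions.add) CountingConditions.zero
    fun d hd => (hL d hd).countingConditions

theorem AdmissibleD.add {D₁ D₂ : Multiset (ℕ × Bool)} (h₁ : AdmissibleD D₁)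
    (h₂ : AdmissibleD D₂) : AdmissibleD (D₁ + D₂) := by
  obtain ⟨L₁, hL₁, rfl⟩ := h₁
  obtain ⟨L₂, hL₂, rfl⟩ := h₂
  refine ⟨L₁ + L₂, fun d hd => ?_, Multiset.sum_add _ _⟩
  rcases Multiset.mem_add.mp hd with hd | hd
  exacts [hL₁ d hd, hL₂ d hd]

theorem IndecompD.admissibleD {d : Multiset (ℕ × Bool)} (h : IndecompD d) : AdmissibleD d :=
  ⟨{d}, by simpa using h, Multiset.sum_singleton d⟩

section Shapes

variable {l : ℕ}

theorem indecompD_singleton_false (hl : l % 4 = 1) : IndecompD {(l, false)} :=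
  Or.inl ⟨l / 4, by rw [show 4 * (l / 4) + 1 = l by omega]⟩

theorem indecompD_singleton_true (hl : l % 4 = 3) : IndecompD {(l, true)} :=
  Or.inr <| Or.inl ⟨(l + 1) / 4, by omega, by rw [show 4 * ((l + 1) / 4) - 1 = l by omega]⟩

theorem indecompD_double_false (hl : l % 4 = 3) : IndecompD {(l, false), (l, false)} :=
  Or.inr <| Or.inr <| Or.inl
    ⟨(l + 1) / 4, by omega, by rw [show 4 * ((l + 1) / 4) - 1 = l by omega]⟩

theorem indecompD_double_true (hl : l % 4 = 1) : IndecompD {(l, true), (l, true)} :=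
  Or.inr <| Or.inr <| Or.inr <| Or.inl ⟨l / 4, by rw [show 4 * (l / 4) + 1 = l by omega]⟩

theorem indecompD_pair (hl : l % 2 = 0) (hl₀ : 1 ≤ l) : IndecompD {(l, false), (l, true)} :=
  Or.inr <| Or.inr <| Or.inr <| Or.inr ⟨l / 2, by omega, by rw [show 2 * (l / 2) = l by omega]⟩

end Shapes

theorem CountingConditions.exists_indecompD_le {D : Multiset (ℕ × Bool)}
    (hC : CountingConditions D) {l : ℕ} {ε : Bool} (hl : 1 ≤ l) (hmem : (l, ε) ∈ D) :
    ∃ S, IndecompD S ∧ S ≤ D ∧ S ≠ 0 := by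
  have hcount : 1 ≤ D.count (l, ε) := Multiset.one_le_count_iff_mem.mpr hmem
  rcases Nat.even_or_odd l with ⟨k, rfl⟩ | hodd
  · have hl2 : (k + k) % 2 = 0 := by omega
    have heq := hC.1 _ hl2
    have hboth : (k + k, false) ∈ D ∧ (k + k, true) ∈ D := by
      simp only [← Multiset.one_le_count_iff_mem]
      cases ε <;> omega
    refine ⟨_, indecompD_pair hl2 hl, ?_, by simp⟩
    exact (Multiset.cons_le_of_notMem (by simp)).mpr ⟨hboth.1, Multiset.singleton_le.mpr hboth.2⟩
  · have h4 : l % 4 = 1 ∨ l % 4 = 3 := by rcases hodd with ⟨k, rfl⟩; omega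
    rcases h4 with h4 | h4 <;> cases ε
    · exact ⟨_, indecompD_singleton_false h4, Multiset.singleton_le.mpr hmem, by simp⟩
    · obtain ⟨j, hj⟩ := hC.2.1 l h4
      exact ⟨_, indecompD_double_true h4,
        (Multiset.le_count_iff_replicate_le (n := 2)).mp (by omega), by simp⟩
    · obtain ⟨j, hj⟩ := hC.2.2 l h4
      exact ⟨_, indecompD_double_false h4,
        (Multiset.le_count_iff_replicate_le (n := 2)).mp (by omega), by simp⟩
    · exact ⟨_, indecompD_singleton_true h4, Multiset.singleton_le.mpr hmem, by simp⟩

theorem CountingConditions.admissibleD {D : Multiset (ℕ × Bool)} (hD : ∀ p ∈ D, 1 ≤ p.1)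
    (hC : CountingConditions D) : AdmissibleD D := by
  induction D using Multiset.strongInductionOn with
  | ih D ih =>
    obtain rfl | ⟨⟨l, ε⟩, hmem⟩ := Multiset.empty_or_exists_mem D
    · exact ⟨0, by simp, rfl⟩
    obtain ⟨S, hS, hSD, hS₀⟩ := hC.exists_indecompD_le (hD _ hmem) hmem
    obtain ⟨D', rfl⟩ := Multiset.le_iff_exists_add.mp hSD
    have hlt : D' < S + D' := lt_add_of_pos_left D' (pos_iff_ne_zero.mpr hS₀)
    refine hS.admissibleD.add (ih D' hlt (fun p hp => hD p ?_) (hC.of_add hS.countingConditions))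
    exact Multiset.mem_add.mpr (Or.inr hp)

/-- A marked diagram (all lines of length `≥ 1`) is admissible if and only if: for every
even length the numbers of lines of the two parities agree; for every length `≡ 1 (mod 4)`
the number of lines of parity `1` is even; and for every length `≡ 3 (mod 4)` the number
of lines of parity `0` is even. -/
theorem admissible_iff_counting (D : Multiset (ℕ × Bool)) (hD : ∀ p ∈ D, 1 ≤ p.1) :
    AdmissibleD D ↔
      ((∀ l : ℕ, l % 2 = 0 → D.count (l, false) = D.count (l, true)) ∧
       (∀ l : ℕ, l % 4 = 1 → Even (D.count (l, true))) ∧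
       (∀ l : ℕ, l % 4 = 3 → Even (D.count (l, false)))) :=
  ⟨AdmissibleD.countingConditions, CountingConditions.admissibleD hD⟩
end

section
/- Every nonempty admissible marked diagram of parity ε contains at least one line of odd length and parity ε. -/
/-! Call the charge of a diagram the number of boxes labelled `0` minus the number labelled `1`.
A line `(ℓ, ε)` contributes `(-1)^ε` if `ℓ` is odd and nothing if `ℓ` is even, while a diagram of
parity `ε` has charge `(-1)^ε`. If no odd line had parity `ε`, every nonzero contribution would
have the opposite sign. -/

def parSign (ε : Bool) : ℤ := if ε then -1 else 1

def chargeD (D : Multiset (ℕ × Bool)) : ℤ := (sizeD false D : ℤ) - sizeD true D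

theorem chargeD_eq_sum (D : Multiset (ℕ × Bool)) :
    chargeD D = (D.map fun l => parSign l.2 * (l.1 % 2 : ℕ)).sum := by
  simp only [chargeD, sizeD, Nat.cast_multiset_sum, Multiset.map_map, ← Multiset.sum_map_sub]
  congr 1
  refine Multiset.map_congr rfl fun ⟨ℓ, ε⟩ _ => ?_
  cases ε <;> simp only [Function.comp_apply, parSign, Bool.false_eq_true, Bool.true_eq_false,
    if_true, if_false] <;> omega

theorem HasParityD.chargeD_eq {ε : Bool} {D : Multiset (ℕ × Bool)} (h : HasParityD ε D) :
    chargeD D = parSign ε := by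
  obtain ⟨m, htrue, hfalse⟩ := h
  cases ε <;> simp only [chargeD, parSign, Bool.false_eq_true, if_true, if_false] at hfalse ⊢ <;>
    omega

theorem parSign_mul_chargeD_nonpos {ε : Bool} {D : Multiset (ℕ × Bool)}
    (h : ∀ ℓ, Odd ℓ → (ℓ, ε) ∉ D) : parSign ε * chargeD D ≤ 0 := by
  rw [chargeD_eq_sum, ← Multiset.sum_map_mul_left]
  refine (Multiset.sum_le_card_nsmul _ 0 fun x hx => ?_).trans_eq (smul_zero _)
  obtain ⟨⟨ℓ, ε'⟩, hmem, rfl⟩ := Multiset.mem_map.mp hx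
  rcases Nat.even_or_odd ℓ with hℓ | hℓ
  · simp [Nat.even_iff.mp hℓ]
  · obtain rfl : ε' = !ε := by
      cases ε <;> cases ε' <;> first | rfl | exact absurd hmem (h ℓ hℓ)
    cases ε <;> simp [parSign, Nat.odd_iff.mp hℓ]

theorem exists_odd_line_of_parity_general (D : Multiset (ℕ × Bool)) (ε : Bool)
    (hpar : HasParityD ε D) :
    ∃ l : ℕ, Odd l ∧ (l, ε) ∈ D := by
  by_contra! h
  have hnonpos := parSign_mul_chargeD_nonpos h
  rw [hpar.chargeD_eq] at hnonpos
  cases ε <;> simp [parSign] at hnonpos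

/-- Every nonempty admissible marked diagram of parity `ε` contains a line of odd length
and parity `ε`. -/
theorem exists_odd_line_of_parity (D : Multiset (ℕ × Bool)) (ε : Bool)
    (hadm : AdmissibleD D) (hne : D ≠ 0) (hpar : HasParityD ε D) :
    ∃ l : ℕ, Odd l ∧ (l, ε) ∈ D :=
  exists_odd_line_of_parity_general D ε hpar
end

section
/- Every admissible marked diagram D of size (2n+1, 2n) admits at least one admissible slicing, i.e., the set 𝒜(D) of admissible slicings of D is nonempty. -/
section

variable {D D' R : Multiset (ℕ × Bool)} {k : ℕ}

@[simp]
lemma sizeD_zero (b : Bool) : sizeD b 0 = 0 := by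
  simp [sizeD]

@[simp]
lemma sizeD_add (b : Bool) (D R : Multiset (ℕ × Bool)) :
    sizeD b (D + R) = sizeD b D + sizeD b R := by
  simp [sizeD]

@[simp]
lemma sizeD_cons (b : Bool) (l : ℕ × Bool) (D : Multiset (ℕ × Bool)) :
    sizeD b (l ::ₘ D) = (if l.2 = b then (l.1 + 1) / 2 else l.1 / 2) + sizeD b D := by
  simp [sizeD]

@[simp]
lemma sizeD_singleton (b : Bool) (l : ℕ × Bool) :
    sizeD b {l} = if l.2 = b then (l.1 + 1) / 2 else l.1 / 2 := by
  simp [sizeD]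

def excessD (D : Multiset (ℕ × Bool)) : ℤ := sizeD false D - sizeD true D

lemma excessD_sum (L : Multiset (Multiset (ℕ × Bool))) :
    excessD L.sum = (L.map excessD).sum := by
  induction L using Multiset.induction with
  | empty => simp [excessD]
  | cons d L ih =>
    simp only [Multiset.sum_cons, Multiset.map_cons, ← ih, excessD, sizeD_add]
    push_cast
    ring

lemma admissibleD_zero : AdmissibleD 0 := ⟨0, by simp, rfl⟩

lemma AdmissibleD.add_s15 (hD : AdmissibleD D) (hR : AdmissibleD R) : AdmissibleD (D + R) := by
  obtain ⟨L, hL, rfl⟩ := hD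
  obtain ⟨L', hL', rfl⟩ := hR
  refine ⟨L + L', fun d hd => ?_, Multiset.sum_add L L'⟩
  rcases Multiset.mem_add.1 hd with hd | hd
  exacts [hL d hd, hL' d hd]

lemma IndecompD.admissibleD_s15 (hD : IndecompD D) : AdmissibleD D :=
  ⟨{D}, by simpa using hD, Multiset.sum_singleton D⟩

lemma admissibleD_sum_erase {L : Multiset (Multiset (ℕ × Bool))} (hL : ∀ d ∈ L, IndecompD d)
    (d : Multiset (ℕ × Bool)) : AdmissibleD (L.erase d).sum :=
  ⟨L.erase d, fun _ h => hL _ (Multiset.mem_of_mem_erase h), rfl⟩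

lemma moveAtD_single {k : ℕ} (ε : Bool) (hk : 2 ≤ k) :
    MoveAtD k {(k, ε)} (if k = 2 then 0 else {(k - 2, !ε)}) :=
  Or.inl ⟨ε, hk, Multiset.mem_singleton_self _, by simp⟩

lemma moveAtD_pair (k : ℕ) (ε' ε'' : Bool) :
    MoveAtD k {(k, ε'), (k, ε'')} (if k = 1 then 0 else {(k - 1, !ε'), (k - 1, ε'')}) :=
  Or.inr ⟨ε', ε'', by simp, by simp, by simp⟩

lemma MoveAtD.add_right (h : MoveAtD k D D') (R : Multiset (ℕ × Bool)) :
    MoveAtD k (D + R) (D' + R) := by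
  rcases h with ⟨ε', hk, hmem, rfl⟩ | ⟨ε', ε'', hmem', hmem'', rfl⟩
  · refine Or.inl ⟨ε', hk, Multiset.mem_add.2 (Or.inl hmem), ?_⟩
    rw [Multiset.erase_add_left_pos _ hmem, add_right_comm]
  · refine Or.inr ⟨ε', ε'', Multiset.mem_add.2 (Or.inl hmem'), ?_, ?_⟩
    · rw [Multiset.erase_add_left_pos _ hmem']
      exact Multiset.mem_add.2 (Or.inl hmem'')
    · rw [Multiset.erase_add_left_pos _ hmem', Multiset.erase_add_left_pos _ hmem'',
        add_right_comm]

def StepD (b : Bool) (D D' : Multiset (ℕ × Bool)) : Prop :=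
  AdmissibleD D' ∧ (∃ k, MoveAtD k D D') ∧
    sizeD b D' + 2 = sizeD b D ∧ sizeD (!b) D' = sizeD (!b) D

lemma StepD.add_right {b : Bool} (h : StepD b D D') (hR : AdmissibleD R) :
    StepD b (D + R) (D' + R) := by
  obtain ⟨hadm, ⟨k, hmove⟩, hb, hnb⟩ := h
  exact ⟨hadm.add_s15 hR, ⟨k, hmove.add_right R⟩, by simp only [sizeD_add]; omega,
    by simp only [sizeD_add]; omega⟩

lemma admissibleD_pair_odd_true (n : ℕ) : AdmissibleD {(2 * n + 1, true), (2 * n + 1, true)} := by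
  obtain ⟨q, rfl | rfl⟩ := Nat.even_or_odd' n
  · exact IndecompD.admissibleD_s15 (Or.inr (Or.inr (Or.inr (Or.inl ⟨q, by ring_nf⟩))))
  · have hB : IndecompD {(2 * (2 * q + 1) + 1, true)} :=
      Or.inr (Or.inl ⟨q + 1, by omega, by rw [show 4 * (q + 1) - 1 = 2 * (2 * q + 1) + 1 by omega]⟩)
    exact hB.admissibleD_s15.add_s15 hB.admissibleD_s15

lemma stepD_false_single {p : ℕ} (hp : 1 ≤ p) :
    StepD false {(4 * p + 1, false)} {(4 * p - 1, true)} := by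
  have hmove := moveAtD_single (k := 4 * p + 1) false (by omega)
  rw [if_neg (by omega), show 4 * p + 1 - 2 = 4 * p - 1 by omega] at hmove
  exact ⟨IndecompD.admissibleD_s15 (Or.inr (Or.inl ⟨p, hp, rfl⟩)), ⟨_, hmove⟩,
    by simp; omega, by simp; omega⟩

lemma stepD_true_single {p : ℕ} (hp : 1 ≤ p) :
    StepD true {(4 * p - 1, true)} {(4 * p - 3, false)} := by
  have hmove := moveAtD_single (k := 4 * p - 1) true (by omega)
  rw [if_neg (by omega), show 4 * p - 1 - 2 = 4 * p - 3 by omega] at hmove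
  exact ⟨IndecompD.admissibleD_s15 (Or.inl ⟨p - 1, by rw [show 4 * (p - 1) + 1 = 4 * p - 3 by omega]⟩),
    ⟨_, hmove⟩, by simp; omega, by simp; omega⟩

lemma stepD_false_pair_one : StepD false {(1, false), (1, false)} 0 :=
  ⟨admissibleD_zero, ⟨1, by simpa using moveAtD_pair 1 false false⟩, by simp, by simp⟩

lemma stepD_true_pair_one : StepD true {(1, true), (1, true)} 0 :=
  ⟨admissibleD_zero, ⟨1, by simpa using moveAtD_pair 1 true true⟩, by simp, by simp⟩

lemma stepD_false_pair {p : ℕ} (hp : 1 ≤ p) :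
    StepD false {(4 * p - 1, false), (4 * p - 1, false)}
      {(4 * p - 2, true), (4 * p - 2, false)} := by
  have hmove := moveAtD_pair (4 * p - 1) false false
  rw [if_neg (by omega), show 4 * p - 1 - 1 = 4 * p - 2 by omega] at hmove
  refine ⟨IndecompD.admissibleD_s15 (Or.inr (Or.inr (Or.inr (Or.inr ⟨2 * p - 1, by omega, ?_⟩)))),
    ⟨_, hmove⟩, by simp; omega, by simp; omega⟩
  rw [show 2 * (2 * p - 1) = 4 * p - 2 by omega, Multiset.pair_comm]

lemma stepD_true_pair {p : ℕ} (hp : 1 ≤ p) :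
    StepD true {(4 * p + 1, true), (4 * p + 1, true)} {(4 * p, false), (4 * p, true)} := by
  have hmove := moveAtD_pair (4 * p + 1) true true
  rw [if_neg (by omega), Nat.add_sub_cancel] at hmove
  exact ⟨IndecompD.admissibleD_s15 (Or.inr (Or.inr (Or.inr (Or.inr ⟨2 * p, by omega, by ring_nf⟩)))),
    ⟨_, hmove⟩, by simp; omega, by simp; omega⟩

lemma stepD_false_mixed {p : ℕ} (hp : 1 ≤ p) :
    StepD false {(2 * p, false), (2 * p, true)} {(2 * p - 1, true), (2 * p - 1, true)} := by
  have hmove := moveAtD_pair (2 * p) false true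
  rw [if_neg (by omega)] at hmove
  refine ⟨?_, ⟨_, hmove⟩, by simp; omega, by simp; omega⟩
  simpa [show 2 * p - 1 = 2 * (p - 1) + 1 by omega] using admissibleD_pair_odd_true (p - 1)

lemma IndecompD.exists_stepD_false (hD : IndecompD D) (hex : 0 ≤ excessD D)
    (hne : D ≠ {(1, false)}) : ∃ D', StepD false D D' := by
  rcases hD with ⟨p, rfl⟩ | ⟨p, hp, rfl⟩ | ⟨p, hp, rfl⟩ | ⟨p, rfl⟩ | ⟨p, hp, rfl⟩
  · exact ⟨_, stepD_false_single (Nat.pos_of_ne_zero fun h => hne (by simp [h]))⟩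
  · simp [excessD] at hex; omega
  · exact ⟨_, stepD_false_pair hp⟩
  · simp [excessD] at hex; omega
  · exact ⟨_, stepD_false_mixed hp⟩

lemma IndecompD.exists_stepD_true (hD : IndecompD D) (hex : excessD D < 0) :
    ∃ D', StepD true D D' := by
  rcases hD with ⟨p, rfl⟩ | ⟨p, hp, rfl⟩ | ⟨p, hp, rfl⟩ | ⟨p, rfl⟩ | ⟨p, hp, rfl⟩
  · simp [excessD] at hex; omega
  · exact ⟨_, stepD_true_single hp⟩
  · simp [excessD] at hex; omega
  · rcases Nat.eq_zero_or_pos p with rfl | hp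
    · exact ⟨_, stepD_true_pair_one⟩
    · exact ⟨_, stepD_true_pair hp⟩
  · simp [excessD] at hex; omega

lemma exists_stepD_false_one_add {L : Multiset (Multiset (ℕ × Bool))}
    (hL : ∀ d ∈ L, IndecompD d) (hL0 : L ≠ 0) (hex : 0 ≤ excessD L.sum) :
    ∃ D', StepD false ({(1, false)} + L.sum) D' := by
  obtain ⟨d, hdL, hd⟩ : ∃ d ∈ L, 0 ≤ excessD d := by
    by_contra! h
    have := Multiset.sum_lt_sum_of_nonempty hL0 h
    simp only [Multiset.map_const', Multiset.sum_replicate, smul_zero, ← excessD_sum] at this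
    omega
  have hrest := admissibleD_sum_erase hL d
  rw [← Multiset.cons_erase hdL, Multiset.sum_cons]
  by_cases hd1 : d = {(1, false)}
  · subst hd1
    rw [← add_assoc, Multiset.singleton_add]
    exact ⟨_, stepD_false_pair_one.add_right hrest⟩
  · obtain ⟨d', h⟩ := (hL d hdL).exists_stepD_false hd hd1
    rw [add_left_comm]
    exact ⟨_, h.add_right ((IndecompD.admissibleD_s15 (Or.inl ⟨0, rfl⟩)).add_s15 hrest)⟩

lemma AdmissibleD.exists_stepD_false (hD : AdmissibleD D) (hex : 0 < excessD D)
    (hne : D ≠ {(1, false)}) : ∃ D', StepD false D D' := by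
  obtain ⟨L, hL, rfl⟩ := hD
  obtain ⟨d, hdL, hd⟩ : ∃ d ∈ L, 0 < excessD d := by
    by_contra! h
    have := Multiset.sum_map_le_sum_map excessD (fun _ => 0) h
    simp only [Multiset.map_const', Multiset.sum_replicate, smul_zero, ← excessD_sum] at this
    omega
  have hL' : ∀ e ∈ L.erase d, IndecompD e := fun e he => hL e (Multiset.mem_of_mem_erase he)
  rw [← Multiset.cons_erase hdL, Multiset.sum_cons] at hex hne ⊢
  by_cases hd1 : d = {(1, false)}
  · subst hd1
    refine exists_stepD_false_one_add hL' (fun h => hne (by simp [h])) ?_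
    simp [excessD] at hex ⊢
    omega
  · obtain ⟨d', h⟩ := (hL d hdL).exists_stepD_false hd.le hd1
    exact ⟨_, h.add_right (admissibleD_sum_erase hL d)⟩

lemma AdmissibleD.exists_stepD_true (hD : AdmissibleD D) (hex : excessD D < 0) :
    ∃ D', StepD true D D' := by
  obtain ⟨L, hL, rfl⟩ := hD
  obtain ⟨d, hdL, hd⟩ : ∃ d ∈ L, excessD d < 0 := by
    by_contra! h
    have := Multiset.sum_map_le_sum_map (fun _ => 0) excessD h
    simp only [Multiset.map_const', Multiset.sum_replicate, smul_zero, ← excessD_sum] at this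
    omega
  obtain ⟨d', h⟩ := (hL d hdL).exists_stepD_true hd
  rw [← Multiset.cons_erase hdL, Multiset.sum_cons]
  exact ⟨_, h.add_right (admissibleD_sum_erase hL d)⟩

lemma StepD.subdiagD {b : Bool} (h : StepD b D D') (hD : HasParityD b D) : SubdiagD D D' := by
  obtain ⟨hadm, ⟨k, hmove⟩, hb, hnb⟩ := h
  obtain ⟨m, hm1, hm0⟩ := hD
  refine ⟨k, hadm, ?_, ⟨b, ⟨m, hm1, hm0⟩, ?_⟩, hmove⟩ <;> cases b <;>
    simp only [HasParityD, Bool.not_false, Bool.not_true, Bool.false_eq_true, ↓reduceIte]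
      at hnb hm0 ⊢
  · omega
  · omega
  · exact ⟨m, by omega, by omega⟩
  · exact ⟨m - 1, by omega, by omega⟩

lemma rel_cons_castSucc_succ {α : Type*} {r : α → α → Prop} {n : ℕ} {a : α}
    {t : Fin (n + 1) → α} (h : r a (t 0)) (ht : ∀ i : Fin n, r (t i.castSucc) (t i.succ))
    (i : Fin (n + 1)) :
    r ((Fin.cons a t : Fin (n + 2) → α) i.castSucc) ((Fin.cons a t : Fin (n + 2) → α) i.succ) := by
  induction i using Fin.cases with
  | zero => simpa using h
  | succ j => simpa [← Fin.succ_castSucc] using ht j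

lemma cons_cons_mem_slicingsD {n : ℕ} {D₁ D₂ : Multiset (ℕ × Bool)}
    {s : Fin (2 * n + 1) → Multiset (ℕ × Bool)} (h₁ : SubdiagD D D₁) (h₂ : SubdiagD D₁ D₂)
    (hs : s ∈ SlicingsD n D₂) : Fin.cons D (Fin.cons D₁ s) ∈ SlicingsD (n + 1) D := by
  obtain ⟨rfl, hs⟩ := hs
  exact ⟨rfl, rel_cons_castSucc_succ h₁ (rel_cons_castSucc_succ h₂ hs)⟩

end

/-- Every admissible marked diagram of size `(2n+1, 2n)` admits at least one admissible
slicing. -/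
theorem slicings_nonempty (n : ℕ) (D : Multiset (ℕ × Bool)) (hadm : AdmissibleD D)
    (hsize0 : sizeD false D = 2 * n + 1) (hsize1 : sizeD true D = 2 * n) :
    (SlicingsD n D).Nonempty := by
  induction n generalizing D with
  | zero => exact ⟨fun _ => D, rfl, fun i => i.elim0⟩
  | succ n ih =>
    have hne : D ≠ {(1, false)} := fun h => by simp [h] at hsize0
    obtain ⟨D₁, hstep₁⟩ := hadm.exists_stepD_false (by simp [excessD]; omega) hne
    have h₁0 : sizeD false D₁ + 2 = sizeD false D := hstep₁.2.2.1
    have h₁1 : sizeD true D₁ = sizeD true D := hstep₁.2.2.2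
    obtain ⟨D₂, hstep₂⟩ := hstep₁.1.exists_stepD_true (by simp [excessD]; omega)
    have h₂0 : sizeD false D₂ = sizeD false D₁ := hstep₂.2.2.2
    have h₂1 : sizeD true D₂ + 2 = sizeD true D₁ := hstep₂.2.2.1
    obtain ⟨s, hs⟩ := ih D₂ hstep₂.1 (by omega) (by omega)
    have hpar : HasParityD false D := ⟨n + 1, by omega, by simp; omega⟩
    have hpar₁ : HasParityD true D₁ := ⟨n + 1, by omega, by simp; omega⟩
    exact ⟨_, cons_cons_mem_slicingsD (hstep₁.subdiagD hpar) (hstep₂.subdiagD hpar₁) hs⟩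
end
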